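/- arXiv:1703.04859 — 7 statements merged into one kernel-verified Lean document; each statement's English description precedes it below -/
import Mathlib

section
/- Let H = {X₀, X₁, …, Xₙ} be a finite fusion rule algebra with product ∘_H and involution *_H, and let d be a dimension function on H all of whose values d(X_i) are positive integers. Let Y₁ be a new element, put F = {X₀, …, Xₙ, Y₁}, and define a bilinear product ∘_F on ℂF by X_i ∘_F X_j := X_i ∘_H X_j, X_i ∘_F Y₁ := d(X_i)·Y₁, Y₁ ∘_F X_i := d(X_i)·Y₁, and Y₁ ∘_F Y₁ := R(H) = Σ_{k=0}^{n} d(X_k)·X_k, with involution X_i* := X_i^{*_H} and Y₁* := Y₁. Then (F, ∘_F, *) is a fusion rule algebra; in particular ∘_F is associative: (X_i ∘_F X_j) ∘_F X_k = X_i ∘_F (X_j ∘_F X_k), (X_i ∘_F X_j) ∘_F Y₁ = X_i ∘_F (X_j ∘_F Y₁), (X_i ∘_F Y₁) ∘_F Y₁ = X_i ∘_F (Y₁ ∘_F Y₁), and (Y₁ ∘_F Y₁) ∘_F Y₁ = Y₁ ∘_F (Y₁ ∘_F Y₁). -/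
/-!
Everything rests on two facts about `R(H) = Σₖ d(Xₖ) Xₖ` and the dimension function `d`:
`Xᵢ ∘ R(H) = R(H) ∘ Xᵢ = d(Xᵢ) R(H)`, and `d(Xᵢ*) = d(Xᵢ)`, `d(X₀) = 1`.
Evaluating associativity at `X₀` gives Frobenius reciprocity `a_{ij}^k = a_{j,k*}^{i*}`, and the
star axiom gives `a_{ij}^k = a_{j*,i*}^{k*}`; together `a_{ij}^k = a_{i*,k}^j`, which turns the
dimension identity into `Xᵢ ∘ R(H) = d(Xᵢ*) R(H)`. Applying the multiplicative functional
`u ↦ Σₖ uₖ d(Xₖ)` to both sides gives `d(Xᵢ) Σ d² = d(Xᵢ*) Σ d²`, hence `d(Xᵢ*) = d(Xᵢ)`;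
the right eigenvector equation is the star of the left one.

All axioms of the join are bilinear (or conjugate-linear) in their arguments, so it suffices to
check them on basis elements, where each product is a product in `H`, a multiple of `Y₁`, or a
multiple of `R(H)`, and the two facts above match the two sides.
-/

open Finsupp

/-- The conjugate-linear extension to `ℂF` of an involution `inv : F → F`:
`(Σ aᵢ Xᵢ)* = Σ conj(aᵢ) Xᵢ*`. -/
noncomputable def fstar {F : Type*} (inv : F → F) (u : F →₀ ℂ) : F →₀ ℂ :=
  Finsupp.mapDomain inv (Finsupp.mapRange (starRingEnd ℂ) (map_zero _) u)

/-- A fusion rule algebra on a set `F`: an associative bilinear product `mul` on the free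
complex vector space `F →₀ ℂ` with unit the basis vector at `one`, an involution `inv`
making `(ℂF, mul, *)` a `*`-algebra, such that products of basis elements have
non-negative integer coefficients, and the coefficient at `one` of `Xᵢ ∘ Xⱼ` is `1` if
`Xⱼ = Xᵢ*` and `0` otherwise. -/
structure FusionRuleAlgebra (F : Type*) [DecidableEq F] where
  mul : (F →₀ ℂ) →ₗ[ℂ] (F →₀ ℂ) →ₗ[ℂ] (F →₀ ℂ)
  one : F
  inv : F → F
  inv_involutive : Function.Involutive inv
  mul_assoc : ∀ u v w, mul (mul u v) w = mul u (mul v w)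
  one_mul : ∀ u, mul (Finsupp.single one 1) u = u
  mul_one : ∀ u, mul u (Finsupp.single one 1) = u
  star_mul : ∀ u v, fstar inv (mul u v) = mul (fstar inv v) (fstar inv u)
  coeff_nat : ∀ i j k, ∃ n : ℕ,
    mul (Finsupp.single i 1) (Finsupp.single j 1) k = (n : ℂ)
  coeff_one : ∀ i j,
    mul (Finsupp.single i 1) (Finsupp.single j 1) one = if j = inv i then 1 else 0

/-- Bilinear extension to `ℂα` of a product defined on basis elements. -/
noncomputable def extendBilin {α : Type*} (b : α → α → (α →₀ ℂ)) :
    (α →₀ ℂ) →ₗ[ℂ] (α →₀ ℂ) →ₗ[ℂ] (α →₀ ℂ) :=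
  Finsupp.lsum ℂ fun i =>
    LinearMap.toSpanSingleton ℂ _
      (Finsupp.lsum ℂ fun j => LinearMap.toSpanSingleton ℂ _ (b i j))

/-- The product on basis elements for the join `H ∨_F ℤ₂`: on `ℂH` it is the product of
`H`; `X_i ∘ Y₁ = Y₁ ∘ X_i = d(X_i)·Y₁`; and `Y₁ ∘ Y₁ = R(H) = Σ_k d(X_k)·X_k`.
Here `Y₁` is represented by `none` and `X_i` by `some i`. -/
noncomputable def joinBasisMul {H : Type*} [Fintype H] [DecidableEq H]
    (A : FusionRuleAlgebra H) (d : H → ℕ) :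
    Option H → Option H → (Option H →₀ ℂ)
  | Option.some i, Option.some j =>
      Finsupp.mapDomain Option.some (A.mul (Finsupp.single i 1) (Finsupp.single j 1))
  | Option.some i, Option.none => (d i : ℂ) • Finsupp.single Option.none 1
  | Option.none, Option.some j => (d j : ℂ) • Finsupp.single Option.none 1
  | Option.none, Option.none => ∑ k, (d k : ℂ) • Finsupp.single (Option.some k) 1

/-- The bilinear product of the join `H ∨_F ℤ₂` on `ℂ(H ∪ {Y₁})`. -/
noncomputable def joinMul {H : Type*} [Fintype H] [DecidableEq H]
    (A : FusionRuleAlgebra H) (d : H → ℕ) :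
    (Option H →₀ ℂ) →ₗ[ℂ] (Option H →₀ ℂ) →ₗ[ℂ] (Option H →₀ ℂ) :=
  extendBilin (joinBasisMul A d)

section Star

variable {F : Type*} (inv : F → F)

theorem fstar_zero : fstar inv 0 = 0 := by
  simp [fstar]

theorem fstar_add (u v : F →₀ ℂ) : fstar inv (u + v) = fstar inv u + fstar inv v := by
  simp only [fstar, mapRange_add (map_add (starRingEnd ℂ)), mapDomain_add]

theorem fstar_smul (c : ℂ) (u : F →₀ ℂ) :
    fstar inv (c • u) = starRingEnd ℂ c • fstar inv u := by
  rw [fstar, fstar, ← mapDomain_smul]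
  congr 1
  ext a
  simp

theorem fstar_single (a : F) (x : ℂ) :
    fstar inv (single a x) = single (inv a) (starRingEnd ℂ x) := by
  simp [fstar]

variable {inv}

theorem fstar_apply_of_involutive (hinv : Function.Involutive inv) (u : F →₀ ℂ) (k : F) :
    fstar inv u (inv k) = starRingEnd ℂ (u k) := by
  rw [fstar, mapDomain_apply hinv.injective, mapRange_apply]

theorem fstar_fstar (hinv : Function.Involutive inv) (u : F →₀ ℂ) :
    fstar inv (fstar inv u) = u := by
  ext k
  conv_lhs => rw [← hinv k]
  rw [fstar_apply_of_involutive hinv, fstar_apply_of_involutive hinv, Complex.conj_conj]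

theorem fstar_mapDomain_some (u : F →₀ ℂ) :
    fstar (Option.map inv) (mapDomain some u) = mapDomain some (fstar inv u) := by
  rw [fstar, ← mapDomain_mapRange _ _ _ _ (map_add _), ← mapDomain_comp, fstar,
    ← mapDomain_comp]
  rfl

end Star

section BilinearOnBasis

variable {α : Type*} (m : (α →₀ ℂ) →ₗ[ℂ] (α →₀ ℂ) →ₗ[ℂ] (α →₀ ℂ))

theorem mul_assoc_of_single
    (h : ∀ a b c, m (m (single a 1) (single b 1)) (single c 1)
      = m (single a 1) (m (single b 1) (single c 1)))
    (u v w : α →₀ ℂ) : m (m u v) w = m u (m v w) := by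
  induction u using Finsupp.induction_linear with
  | zero => simp
  | add u₁ u₂ h₁ h₂ => simp [h₁, h₂]
  | single a x =>
    induction v using Finsupp.induction_linear with
    | zero => simp
    | add v₁ v₂ h₁ h₂ => simp [h₁, h₂]
    | single b y =>
      induction w using Finsupp.induction_linear with
      | zero => simp
      | add w₁ w₂ h₁ h₂ => simp [h₁, h₂]
      | single c z =>
        rw [← smul_single_one a x, ← smul_single_one b y, ← smul_single_one c z]
        simp only [map_smul, LinearMap.smul_apply, h]

theorem one_mul_of_single (e : α) (h : ∀ b, m (single e 1) (single b 1) = single b 1)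
    (u : α →₀ ℂ) : m (single e 1) u = u := by
  rw [← LinearMap.id_apply (R := ℂ) u]
  congr 1
  ext b
  simp [h]

theorem mul_one_of_single (e : α) (h : ∀ a, m (single a 1) (single e 1) = single a 1)
    (u : α →₀ ℂ) : m u (single e 1) = u := by
  rw [← LinearMap.flip_apply (R := ℂ), ← LinearMap.id_apply (R := ℂ) u]
  congr 1
  ext a
  simp [h]

theorem fstar_mul_of_single (inv : α → α)
    (h : ∀ a b, fstar inv (m (single a 1) (single b 1)) = m (single (inv b) 1) (single (inv a) 1))
    (u v : α →₀ ℂ) : fstar inv (m u v) = m (fstar inv v) (fstar inv u) := by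
  induction u using Finsupp.induction_linear with
  | zero => simp [fstar_zero]
  | add u₁ u₂ h₁ h₂ => simp [fstar_add, h₁, h₂]
  | single a x =>
    induction v using Finsupp.induction_linear with
    | zero => simp [fstar_zero]
    | add v₁ v₂ h₁ h₂ => simp [fstar_add, h₁, h₂]
    | single b y =>
      rw [← smul_single_one a x, ← smul_single_one b y]
      simp only [map_smul, LinearMap.smul_apply, fstar_smul, fstar_single, map_one, h, smul_smul,
        map_mul, mul_comm]

end BilinearOnBasis

noncomputable def regularElement {F : Type*} [Fintype F] (d : F → ℝ) : F →₀ ℂ :=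
  ∑ k, (d k : ℂ) • single k 1

theorem regularElement_apply {F : Type*} [Fintype F] (d : F → ℝ) (k : F) :
    regularElement d k = d k := by
  classical
  simp [regularElement, finsetSum_apply, single_apply]

namespace FusionRuleAlgebra

variable {F : Type*} [DecidableEq F] (A : FusionRuleAlgebra F)

theorem mul_single_inv_apply_one (u : F →₀ ℂ) (k : F) :
    A.mul u (single (A.inv k) 1) A.one = u k := by
  induction u using Finsupp.induction_linear with
  | zero => simp
  | add u₁ u₂ h₁ h₂ => simp [h₁, h₂]
  | single a x =>
    rw [← smul_single_one a x, map_smul, LinearMap.smul_apply, Finsupp.smul_apply, A.coeff_one]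
    simp [A.inv_involutive.injective.eq_iff, single_apply, eq_comm]

theorem single_mul_apply_one (i : F) (u : F →₀ ℂ) :
    A.mul (single i 1) u A.one = u (A.inv i) := by
  induction u using Finsupp.induction_linear with
  | zero => simp
  | add u₁ u₂ h₁ h₂ => simp [h₁, h₂]
  | single a x =>
    rw [← smul_single_one a x, map_smul, Finsupp.smul_apply, A.coeff_one]
    simp [single_apply]

theorem coeff_rotate (i j k : F) :
    A.mul (single i 1) (single j 1) k = A.mul (single j 1) (single (A.inv k) 1) (A.inv i) := by
  simpa only [mul_single_inv_apply_one, single_mul_apply_one] using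
    congrArg (· A.one) (A.mul_assoc (single i 1) (single j 1) (single (A.inv k) 1))

theorem coeff_star (i j k : F) :
    A.mul (single i 1) (single j 1) k
      = A.mul (single (A.inv j) 1) (single (A.inv i) 1) (A.inv k) := by
  have h := congrArg (· (A.inv k)) (A.star_mul (single i 1) (single j 1))
  simp only [fstar_single, map_one, fstar_apply_of_involutive A.inv_involutive] at h
  obtain ⟨n, hn⟩ := A.coeff_nat i j k
  rw [← h, hn, map_natCast]

theorem coeff_inv_left (i j k : F) :
    A.mul (single i 1) (single j 1) k = A.mul (single (A.inv i) 1) (single k 1) j := by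
  rw [coeff_star, coeff_rotate, A.inv_involutive, A.inv_involutive]

structure IsDimensionFunction [Fintype F] (d : F → ℝ) : Prop where
  pos : ∀ i, 0 < d i
  mul_eq_sum : ∀ i j, (d i : ℂ) * d j = ∑ k, A.mul (single i 1) (single j 1) k * d k

namespace IsDimensionFunction

variable {A} [Fintype F] {d : F → ℝ} (hd : A.IsDimensionFunction d)
include hd

theorem dim_one : d A.one = 1 := by
  have h := hd.mul_eq_sum A.one A.one
  simp only [A.one_mul, single_apply, ite_mul, _root_.one_mul, zero_mul, Finset.sum_ite_eq,
    Finset.mem_univ, if_true] at h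
  exact (mul_eq_left₀ (hd.pos A.one).ne').mp (by exact_mod_cast h)

theorem single_mul_regularElement_eq_dim_inv (i : F) :
    A.mul (single i 1) (regularElement d) = (d (A.inv i) : ℂ) • regularElement d := by
  ext k
  rw [Finsupp.smul_apply, regularElement_apply, smul_eq_mul, hd.mul_eq_sum]
  simp only [regularElement, map_sum, map_smul, finsetSum_apply, Finsupp.smul_apply, smul_eq_mul]
  refine Finset.sum_congr rfl fun l _ => ?_
  rw [coeff_inv_left, mul_comm]

theorem dim_inv (i : F) : d (A.inv i) = d i := by
  set D : (F →₀ ℂ) →ₗ[ℂ] ℂ := linearCombination ℂ fun k => (d k : ℂ)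
  have hD_single_mul (j : F) : D (A.mul (single i 1) (single j 1)) = d i * d j := by
    simp [D, linearCombination_apply, sum_fintype, hd.mul_eq_sum]
  have hDR : D (regularElement d) = ∑ l, (d l : ℂ) * d l := by
    simp [D, regularElement]
  have hDR_ne : D (regularElement d) ≠ 0 := by
    rw [hDR]
    exact_mod_cast (Finset.sum_pos (fun l _ => mul_pos (hd.pos l) (hd.pos l))
      ⟨A.one, Finset.mem_univ _⟩).ne'
  have key : D (A.mul (single i 1) (regularElement d)) = d i * D (regularElement d) := by
    rw [hDR, Finset.mul_sum]
    simp only [regularElement, map_sum, map_smul, smul_eq_mul, hD_single_mul]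
    exact Finset.sum_congr rfl fun l _ => by ring
  rw [hd.single_mul_regularElement_eq_dim_inv, map_smul, smul_eq_mul] at key
  exact_mod_cast mul_right_cancel₀ hDR_ne key

theorem single_mul_regularElement (i : F) :
    A.mul (single i 1) (regularElement d) = (d i : ℂ) • regularElement d := by
  rw [hd.single_mul_regularElement_eq_dim_inv, hd.dim_inv]

theorem fstar_regularElement : fstar A.inv (regularElement d) = regularElement d := by
  ext l
  conv_lhs => rw [← A.inv_involutive l]
  rw [fstar_apply_of_involutive A.inv_involutive, regularElement_apply, regularElement_apply,
    Complex.conj_ofReal, hd.dim_inv]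

theorem regularElement_mul_single (k : F) :
    A.mul (regularElement d) (single k 1) = (d k : ℂ) • regularElement d := by
  have h := A.star_mul (regularElement d) (single k 1)
  rw [hd.fstar_regularElement, fstar_single, map_one, hd.single_mul_regularElement,
    hd.dim_inv] at h
  calc A.mul (regularElement d) (single k 1)
      = fstar A.inv (fstar A.inv (A.mul (regularElement d) (single k 1))) :=
        (fstar_fstar A.inv_involutive _).symm
    _ = (d k : ℂ) • regularElement d := by
        rw [h, fstar_smul, hd.fstar_regularElement, Complex.conj_ofReal]

end IsDimensionFunction

end FusionRuleAlgebra

theorem sum_single_one_apply_mul {α : Type*} [Fintype α] (j : α) (f : α → ℂ) :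
    ∑ k, (single j 1 : α →₀ ℂ) k * f k = f j := by
  classical
  simp only [single_apply, ite_mul, one_mul, zero_mul, Finset.sum_ite_eq, Finset.mem_univ, if_true]

theorem mapDomain_some_apply_none {α : Type*} (u : α →₀ ℂ) : mapDomain some u none = 0 :=
  mapDomain_of_notMem_range u none (by simp)

theorem single_some_eq_mapDomain {α : Type*} (i : α) (x : ℂ) :
    single (some i) x = mapDomain some (single i x) :=
  mapDomain_single.symm

theorem extendBilin_single_single {α : Type*} (b : α → α → (α →₀ ℂ)) (i j : α) (x y : ℂ) :
    extendBilin b (single i x) (single j y) = (x * y) • b i j := by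
  simp [extendBilin, mul_smul]

section Join

variable {H : Type*} [Fintype H] [DecidableEq H] (A : FusionRuleAlgebra H) (d : H → ℕ)

theorem joinMul_mapDomain_some_some (u v : H →₀ ℂ) :
    joinMul A d (mapDomain some u) (mapDomain some v) = mapDomain some (A.mul u v) := by
  have h : (joinMul A d).compl₁₂ (lmapDomain ℂ ℂ some) (lmapDomain ℂ ℂ some)
      = A.mul.compr₂ (lmapDomain ℂ ℂ some) := by
    ext i j : 4
    simp [joinMul, extendBilin_single_single, joinBasisMul]
  exact LinearMap.congr_fun₂ h u v

theorem joinMul_mapDomain_some_none (u : H →₀ ℂ) :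
    joinMul A d (mapDomain some u) (single none 1) = (∑ k, u k * d k) • single none 1 := by
  induction u using Finsupp.induction_linear with
  | zero => simp
  | add u₁ u₂ h₁ h₂ => simp [mapDomain_add, h₁, h₂, Finset.sum_add_distrib, add_smul, add_mul]
  | single a x => simp [joinMul, extendBilin_single_single, joinBasisMul, single_apply, mul_smul]

theorem joinMul_none_mapDomain_some (u : H →₀ ℂ) :
    joinMul A d (single none 1) (mapDomain some u) = (∑ k, u k * d k) • single none 1 := by
  induction u using Finsupp.induction_linear with
  | zero => simp
  | add u₁ u₂ h₁ h₂ => simp [mapDomain_add, h₁, h₂, Finset.sum_add_distrib, add_smul, add_mul]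
  | single a x => simp [joinMul, extendBilin_single_single, joinBasisMul, single_apply, mul_smul]

theorem joinMul_none_none :
    joinMul A d (single none 1) (single none 1)
      = mapDomain some (regularElement fun k => (d k : ℝ)) := by
  simp [joinMul, extendBilin_single_single, joinBasisMul, regularElement, mapDomain_finsetSum]

theorem exists_joinMul_single_single_apply_eq_natCast (a b k : Option H) :
    ∃ n : ℕ, joinMul A d (single a 1) (single b 1) k = n := by
  rcases a with _ | i <;> rcases b with _ | j <;>
    simp only [single_some_eq_mapDomain, joinMul_mapDomain_some_some, joinMul_mapDomain_some_none,
      joinMul_none_mapDomain_some, joinMul_none_none, sum_single_one_apply_mul] <;>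
    rcases k with _ | l
  · exact ⟨0, by simp [mapDomain_some_apply_none]⟩
  · exact ⟨d l, by simp [mapDomain_apply (Option.some_injective H), regularElement_apply]⟩
  · exact ⟨d j, by simp⟩
  · exact ⟨0, by simp⟩
  · exact ⟨d i, by simp⟩
  · exact ⟨0, by simp⟩
  · exact ⟨0, by simp [mapDomain_some_apply_none]⟩
  · simpa [mapDomain_apply (Option.some_injective H)] using A.coeff_nat i j l

variable {A d} (hd : A.IsDimensionFunction fun i => (d i : ℝ))
include hd

theorem joinMul_assoc_single (a b c : Option H) :
    joinMul A d (joinMul A d (single a 1) (single b 1)) (single c 1)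
      = joinMul A d (single a 1) (joinMul A d (single b 1) (single c 1)) := by
  have hdim := hd.mul_eq_sum
  push_cast at hdim
  rcases a with _ | i <;> rcases b with _ | j <;> rcases c with _ | k <;>
    simp only [single_some_eq_mapDomain, joinMul_mapDomain_some_some, joinMul_mapDomain_some_none,
      joinMul_none_mapDomain_some, joinMul_none_none, map_smul, LinearMap.smul_apply,
      sum_single_one_apply_mul]
  · rw [hd.regularElement_mul_single, mapDomain_smul, Complex.ofReal_natCast]
  · rw [smul_smul, hdim]
  · rw [hd.single_mul_regularElement, mapDomain_smul, Complex.ofReal_natCast]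
  · exact smul_comm _ _ _
  · rw [smul_smul, mul_comm, hdim]
  · rw [A.mul_assoc]

theorem fstar_joinMul_single (a b : Option H) :
    fstar (Option.map A.inv) (joinMul A d (single a 1) (single b 1))
      = joinMul A d (single (Option.map A.inv b) 1) (single (Option.map A.inv a) 1) := by
  have hdim_inv (i : H) : d (A.inv i) = d i := by exact_mod_cast hd.dim_inv i
  rcases a with _ | i <;> rcases b with _ | j <;>
    simp only [Option.map_none, Option.map_some, single_some_eq_mapDomain,
      joinMul_mapDomain_some_some, joinMul_mapDomain_some_none, joinMul_none_mapDomain_some,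
      joinMul_none_none, fstar_mapDomain_some, fstar_smul, fstar_single, map_one, map_natCast,
      sum_single_one_apply_mul, hdim_inv]
  · rw [hd.fstar_regularElement]
  · rw [A.star_mul, fstar_single, fstar_single, map_one]

theorem joinMul_single_single_apply_some_one (a b : Option H) :
    joinMul A d (single a 1) (single b 1) (some A.one)
      = if b = Option.map A.inv a then 1 else 0 := by
  rcases a with _ | i <;> rcases b with _ | j <;>
    simp only [single_some_eq_mapDomain, joinMul_mapDomain_some_some, joinMul_mapDomain_some_none,
      joinMul_none_mapDomain_some, joinMul_none_none, sum_single_one_apply_mul] <;>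
    simp [mapDomain_apply (Option.some_injective H), regularElement_apply, hd.dim_one, A.coeff_one]

theorem joinMul_one_mul_single (b : Option H) :
    joinMul A d (single (some A.one) 1) (single b 1) = single b 1 := by
  rcases b with _ | j <;>
    simp only [single_some_eq_mapDomain, joinMul_mapDomain_some_some, joinMul_mapDomain_some_none,
      sum_single_one_apply_mul, A.one_mul]
  simp [show d A.one = 1 by exact_mod_cast hd.dim_one]

theorem joinMul_mul_one_single (a : Option H) :
    joinMul A d (single a 1) (single (some A.one) 1) = single a 1 := by
  rcases a with _ | i <;>
    simp only [single_some_eq_mapDomain, joinMul_mapDomain_some_some, joinMul_none_mapDomain_some,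
      sum_single_one_apply_mul, A.mul_one]
  simp [show d A.one = 1 by exact_mod_cast hd.dim_one]

noncomputable def joinFusionRuleAlgebra : FusionRuleAlgebra (Option H) where
  mul := joinMul A d
  one := some A.one
  inv := Option.map A.inv
  inv_involutive a := by rw [Option.map_map, A.inv_involutive.comp_self, Option.map_id, id]
  mul_assoc := mul_assoc_of_single _ (joinMul_assoc_single hd)
  one_mul := one_mul_of_single _ _ (joinMul_one_mul_single hd)
  mul_one := mul_one_of_single _ _ (joinMul_mul_one_single hd)
  star_mul := fstar_mul_of_single _ _ (fstar_joinMul_single hd)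
  coeff_nat := exists_joinMul_single_single_apply_eq_natCast A d
  coeff_one := joinMul_single_single_apply_some_one hd

end Join

/-- The join of a finite fusion rule algebra `H` (with integer-valued dimension function
`d`) by the cyclic group of order two is again a fusion rule algebra; in particular the
product `∘_F` is associative, on `ℂH`, mixing in one copy of `Y₁`, two copies of `Y₁`,
and on three copies of `Y₁`. -/
theorem join_isFusionRuleAlgebra {H : Type*} [Fintype H] [DecidableEq H]
    (A : FusionRuleAlgebra H) (d : H → ℕ) (hd : ∀ i, 0 < d i)
    (hdim : ∀ i j, (d i : ℂ) * (d j : ℂ)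
      = ∑ k, A.mul (Finsupp.single i 1) (Finsupp.single j 1) k * (d k : ℂ)) :
    (∃ B : FusionRuleAlgebra (Option H),
        B.mul = joinMul A d ∧ B.one = some A.one ∧ B.inv = Option.map A.inv) ∧
      (∀ i j k : H,
        joinMul A d (joinMul A d (Finsupp.single (some i) 1) (Finsupp.single (some j) 1))
            (Finsupp.single (some k) 1)
          = joinMul A d (Finsupp.single (some i) 1)
              (joinMul A d (Finsupp.single (some j) 1) (Finsupp.single (some k) 1))) ∧
      (∀ i j : H,
        joinMul A d (joinMul A d (Finsupp.single (some i) 1) (Finsupp.single (some j) 1))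
            (Finsupp.single none 1)
          = joinMul A d (Finsupp.single (some i) 1)
              (joinMul A d (Finsupp.single (some j) 1) (Finsupp.single none 1))) ∧
      (∀ i : H,
        joinMul A d (joinMul A d (Finsupp.single (some i) 1) (Finsupp.single none 1))
            (Finsupp.single none 1)
          = joinMul A d (Finsupp.single (some i) 1)
              (joinMul A d (Finsupp.single none 1) (Finsupp.single none 1))) ∧
      (joinMul A d (joinMul A d (Finsupp.single none 1) (Finsupp.single none 1))
            (Finsupp.single none 1)
        = joinMul A d (Finsupp.single none 1)
            (joinMul A d (Finsupp.single none 1) (Finsupp.single none 1))) := by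
  have hD : A.IsDimensionFunction fun i => (d i : ℝ) :=
    ⟨fun i => by exact_mod_cast hd i, fun i j => by push_cast; exact hdim i j⟩
  exact ⟨⟨joinFusionRuleAlgebra hD, rfl, rfl, rfl⟩, fun i j k => joinMul_assoc_single hD _ _ _,
    fun i j => joinMul_assoc_single hD _ _ _, fun i => joinMul_assoc_single hD _ _ _,
    joinMul_assoc_single hD _ _ _⟩
end

section
/- Let G be a finite group and H a subgroup of G. Suppose that for all irreducible complex representations τ_i, τ_j, τ_k of H and every g ∈ H one has (Ind_H^G(χ_{τ_i}·χ_{τ_j}))(g) · χ_{τ_k}(g) = χ_{τ_i}(g) · (Ind_H^G(χ_{τ_j}·χ_{τ_k}))(g). Then (G,H) is an admissible pair. -/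
/-!
Take `χ = χ_τ` for an irreducible `τ`, let `1` be the trivial character and `χ̄` the character of
the dual representation, which is again irreducible. Instances of the identity with the triples
`(τ, 1, 1)`, `(τ^∨, 1, 1)` and `(τ, τ^∨, 1)` say that on `ψ ∈ {χ, χ̄, χ χ̄}` the induced class
function satisfies `Ind ψ (g) = ψ(g) · Ind 1 (g)`. By linearity this holds for
`ψ = |χ - χ(g)|²`, which vanishes at `g`, so `Ind ψ (g) = 0`. But `Ind ψ (g)` is a sum of the
non-negative numbers `|χ(s g s⁻¹) - χ(g)|²`, hence each of them is zero.
-/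

open CategoryTheory
open scoped Classical

/-- The pair `(G, H)` is *admissible* if for every irreducible complex representation `τ`
of `H` with character `χ_τ`, every `g ∈ H` and every `s ∈ G` with `s g s⁻¹ ∈ H`, one has
`χ_τ(s g s⁻¹) = χ_τ(g)`. -/
def IsAdmissiblePair (G : Type) [Group G] (H : Subgroup G) : Prop :=
  ∀ (τ : FDRep ℂ H), Simple τ →
    ∀ (g : H) (s : G) (hs : s * (g : G) * s⁻¹ ∈ H),
      τ.character ⟨s * (g : G) * s⁻¹, hs⟩ = τ.character g

/-- The class function on `G` induced from a class function `χ` on the subgroup `H`: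
`(Ind_H^G χ)(g) = (1/|H|) · Σ_{s ∈ G, s g s⁻¹ ∈ H} χ(s g s⁻¹)`. -/
noncomputable def indClass {G : Type} [Group G] [Fintype G] (H : Subgroup G)
    (χ : H → ℂ) (g : G) : ℂ :=
  (Nat.card H : ℂ)⁻¹ *
    ∑ s : G, if hs : s * g * s⁻¹ ∈ H then χ ⟨s * g * s⁻¹, hs⟩ else 0

open Module ComplexConjugate

universe u

namespace LinearMap

variable {K V : Type*} [Field K] [AddCommGroup V] [Module K V]

theorem trace_eq_sum_of_hasEigenvector {ι : Type*} [Fintype ι] (b : Basis ι K V)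
    {f : End K V} {c : ι → K} (hf : ∀ i, f.HasEigenvector (c i) (b i)) :
    trace K V f = ∑ i, c i := by
  rw [trace_eq_matrix_trace K b, Matrix.trace]
  refine Finset.sum_congr rfl fun i _ ↦ ?_
  simp [toMatrix_apply, (hf i).apply_eq_smul]

end LinearMap

namespace Module.End

variable {K : Type u} {V : Type*} [Field K] [AddCommGroup V] [Module K V]

theorem isSemisimple_of_pow_eq_one [CharZero K] {f : End K V} {n : ℕ} (hn : n ≠ 0)
    (hf : f ^ n = 1) : f.IsSemisimple :=
  isSemisimple_of_squarefree_aeval_eq_zero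
    (Polynomial.separable_X_pow_sub_C (1 : K) (by exact_mod_cast hn) one_ne_zero).squarefree
    (by simp [hf])

theorem IsSemisimple.exists_basis_hasEigenvector [IsAlgClosed K] [FiniteDimensional K V]
    {f : End K V} (hf : f.IsSemisimple) :
    ∃ (ι : Type u) (_ : Fintype ι) (b : Basis ι K V) (c : ι → K),
      ∀ i, f.HasEigenvector (c i) (b i) := by
  have hdecomp := DirectSum.isInternal_submodule_of_iSupIndep_of_iSup_eq_top
    f.eigenspaces_iSupIndep hf.iSup_eigenspace_eq_top
  let b := hdecomp.collectedBasis fun μ ↦ finBasis K (f.eigenspace μ)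
  exact ⟨_, FiniteDimensional.fintypeBasisIndex b, b, Sigma.fst,
    fun i ↦ hasEigenvector_iff.mpr ⟨hdecomp.collectedBasis_mem _ i, b.ne_zero i⟩⟩

end Module.End

namespace FDRep

open Module.End Representation

/-- `ρ g` has finite order, so it is diagonalisable with eigenvalues of modulus one, and on the
same eigenbasis `ρ g⁻¹` has the inverse eigenvalues, which are their conjugates. -/
theorem char_inv_eq_conj {Γ : Type*} [Group Γ] (V : FDRep ℂ Γ) {g : Γ} (hg : IsOfFinOrder g) :
    V.character g⁻¹ = conj (V.character g) := by
  have hpow : V.ρ g ^ orderOf g = 1 := by rw [← map_pow, pow_orderOf_eq_one, map_one]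
  obtain ⟨ι, _, b, c, hc⟩ :=
    (isSemisimple_of_pow_eq_one hg.orderOf_pos.ne' hpow).exists_basis_hasEigenvector
  have hunit : ∀ i, ‖c i‖ = 1 := fun i ↦ by
    refine Complex.norm_eq_one_of_pow_eq_one ?_ hg.orderOf_pos.ne'
    have := (hc i).pow_apply (orderOf g)
    rw [hpow, one_apply] at this
    exact smul_left_injective ℂ (b.ne_zero i) (by simpa [eq_comm] using this)
  have hinv : ∀ i, HasEigenvector (V.ρ g⁻¹) (c i)⁻¹ (b i) := fun i ↦ by
    refine hasEigenvector_iff.mpr ⟨mem_eigenspace_iff.mpr ?_, b.ne_zero i⟩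
    have hci : c i ≠ 0 := norm_ne_zero_iff.mp (by simp [hunit i])
    have := inv_self_apply V.ρ g (b i)
    rw [(hc i).apply_eq_smul, map_smul] at this
    rw [eq_inv_smul_iff₀ hci, this]
  rw [character, character, LinearMap.trace_eq_sum_of_hasEigenvector b hc,
    LinearMap.trace_eq_sum_of_hasEigenvector b hinv, map_sum]
  exact Finset.sum_congr rfl fun i _ ↦ Complex.inv_eq_conj (hunit i)

variable {k G : Type u} [Field k] [Group G]

@[simp]
theorem char_trivial (g : G) : (of (Representation.trivial k G k)).character g = 1 := by
  simp [character, Representation.trivial]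

variable [IsAlgClosed k] [CharZero k] [Fintype G]

theorem simple_trivial : Simple (of (Representation.trivial k G k)) := by
  simp [simple_iff_char_is_norm_one]

theorem simple_dual {V : FDRep k G} (hV : Simple V) : Simple (of (dual V.ρ)) := by
  rw [simple_iff_char_is_norm_one] at hV ⊢
  simpa [mul_comm] using hV

end FDRep

section IndClass

variable {G : Type} [Group G] [Fintype G] (H : Subgroup G)

noncomputable def indClassₗ (g : G) : (H → ℂ) →ₗ[ℂ] ℂ where
  toFun χ := indClass H χ g
  map_add' χ ψ := by
    simp only [indClass, Pi.add_apply, ← mul_add, ← Finset.sum_add_distrib]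
    congr! 2 with s
    split_ifs <;> simp
  map_smul' c χ := by
    simp only [indClass, Pi.smul_apply, smul_eq_mul, RingHom.id_apply, Finset.mul_sum]
    congr! 1 with s
    split_ifs <;> ring

theorem indClassₗ_apply (g : G) (χ : H → ℂ) : indClassₗ H g χ = indClass H χ g := rfl

open scoped ComplexOrder in
theorem eq_of_indClass_mul_conj_eq_zero {χ : H → ℂ} {c : ℂ} {g : G}
    (h : indClass H (fun x ↦ (χ x - c) * conj (χ x - c)) g = 0) (s : G)
    (hs : s * g * s⁻¹ ∈ H) : χ ⟨s * g * s⁻¹, hs⟩ = c := by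
  have hsum := (mul_eq_zero.mp h).resolve_left (by simp)
  have hnonneg : ∀ t ∈ Finset.univ, 0 ≤ (if ht : t * g * t⁻¹ ∈ H then
      (χ ⟨t * g * t⁻¹, ht⟩ - c) * conj (χ ⟨t * g * t⁻¹, ht⟩ - c) else 0) := fun t _ ↦ by
    split_ifs
    · rw [Complex.mul_conj]
      exact_mod_cast Complex.normSq_nonneg _
    · rfl
  have := (Finset.sum_eq_zero_iff_of_nonneg hnonneg).mp hsum s (Finset.mem_univ s)
  rwa [dif_pos hs, Complex.mul_conj, Complex.ofReal_eq_zero, Complex.normSq_eq_zero,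
    sub_eq_zero] at this

end IndClass

def IsIndAssociative (G : Type) [Group G] [Fintype G] (H : Subgroup G) : Prop :=
  ∀ (τi τj τk : FDRep ℂ H), Simple τi → Simple τj → Simple τk →
    ∀ g : H,
      indClass H (fun x => τi.character x * τj.character x) (g : G) * τk.character g
        = τi.character g * indClass H (fun x => τj.character x * τk.character x) (g : G)

namespace IsIndAssociative

variable {G : Type} [Group G] [Fintype G] {H : Subgroup G}

theorem indClass_char (h : IsIndAssociative G H) {σ : FDRep ℂ H} (hσ : Simple σ) (g : H) :
    indClass H σ.character g = σ.character g * indClass H (fun _ ↦ 1) g := by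
  simpa using h σ _ _ hσ FDRep.simple_trivial FDRep.simple_trivial g

theorem indClass_char_mul_char (h : IsIndAssociative G H) {σ σ' : FDRep ℂ H} (hσ : Simple σ)
    (hσ' : Simple σ') (g : H) :
    indClass H (fun x ↦ σ.character x * σ'.character x) g
      = σ.character g * σ'.character g * indClass H (fun _ ↦ 1) g := by
  have := h σ σ' _ hσ hσ' FDRep.simple_trivial g
  simp only [FDRep.char_trivial, mul_one] at this
  rw [this, h.indClass_char hσ', mul_assoc]

theorem indClass_mul_conj_sub_eq_zero (h : IsIndAssociative G H) {τ τ' : FDRep ℂ H}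
    (hτ : Simple τ) (hτ' : Simple τ') (hconj : ∀ x, conj (τ.character x) = τ'.character x) (g : H) :
    indClass H (fun x ↦ (τ.character x - τ.character g) *
      conj (τ.character x - τ.character g)) g = 0 := by
  have hexpand : (fun x ↦ (τ.character x - τ.character g) * conj (τ.character x - τ.character g))
      = (fun x ↦ τ.character x * τ'.character x) - conj (τ.character g) • τ.character
        - τ.character g • τ'.character + (τ.character g * τ'.character g) • fun _ ↦ 1 := by
    funext x
    simp only [map_sub, hconj, Pi.add_apply, Pi.sub_apply, Pi.smul_apply, smul_eq_mul]
    ring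
  rw [← indClassₗ_apply, hexpand]
  simp only [map_add, map_sub, map_smul, indClassₗ_apply, smul_eq_mul]
  rw [h.indClass_char_mul_char hτ hτ', h.indClass_char hτ, h.indClass_char hτ', hconj]
  ring

end IsIndAssociative

/-- If the associativity identity (A4) holds for all irreducible representations of `H`,
then `(G,H)` is an admissible pair. -/
theorem isAdmissiblePair_of_assoc (G : Type) [Group G] [Fintype G] (H : Subgroup G)
    (hassoc : ∀ (τi τj τk : FDRep ℂ H), Simple τi → Simple τj → Simple τk →
      ∀ g : H,
        indClass H (fun x => τi.character x * τj.character x) (g : G) * τk.character g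
          = τi.character g *
              indClass H (fun x => τj.character x * τk.character x) (g : G)) :
    IsAdmissiblePair G H := by
  intro τ hτ g s hs
  have hconj (x : H) :
      conj (τ.character x) = (FDRep.of (Representation.dual τ.ρ)).character x := by
    rw [FDRep.char_dual, FDRep.char_inv_eq_conj τ (isOfFinOrder_of_finite x)]
  have hzero :=
    IsIndAssociative.indClass_mul_conj_sub_eq_zero hassoc hτ (FDRep.simple_dual hτ) hconj g
  exact eq_of_indClass_mul_conj_eq_zero H hzero s hs
end

section
/- Let G be a finite group and H a subgroup of G. Suppose that for every irreducible complex representation τ of H there exists a finite-dimensional complex representation π of G whose restriction to H is isomorphic to τ. Then (G,H) is an admissible pair. -/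
open CategoryTheory

/-- If every irreducible representation of `H` extends to `G` (i.e. is isomorphic to the
restriction to `H` of some finite-dimensional representation of `G`), then `(G, H)` is an
admissible pair. -/
theorem admissible_of_extension (G : Type) [Group G] [Fintype G] (H : Subgroup G)
    (hext : ∀ τ : FDRep ℂ H, Simple τ →
      ∃ π : FDRep ℂ G, Nonempty (FDRep.of ((FDRep.ρ π).comp H.subtype) ≅ τ)) :
    IsAdmissiblePair G H := by
  intro τ hτ g s hs
  obtain ⟨π, ⟨e⟩⟩ := hext τ hτ
  have h1 : ∀ x : H, τ.character x = π.character (x : G) := by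
    intro x
    rw [← FDRep.char_iso e]
    rfl
  rw [h1, h1]
  exact FDRep.char_conj π (g : G) s
end

section
/- Let G be a finite group and let G₀ ⊆ G₁ ⊆ G be subgroups. If (G₁, G₀) is an admissible pair and (G, G₁) is an admissible pair, then (G, G₀) is an admissible pair. -/
/-!
For a finite subgroup `H ≤ G`, admissibility of `(G, H)` says exactly that two elements of `H`
that are conjugate in `G` are already conjugate in `H`, because the irreducible characters of a
finite group separate its conjugacy classes. In that form transitivity is immediate: elements of
`G₀` conjugate in `G` are conjugate in `G₁`, hence in `G₀`.

Separation of conjugacy classes is the classical argument: a class function `c` orthogonal to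
every irreducible character gives a central element `∑ c g • g` of the group algebra, which acts
on each simple module by a scalar (Schur) of trace zero, hence by `0`; since the group algebra is
semisimple, the element, and so `c`, vanishes.
-/

open CategoryTheory

namespace Representation

section Schur

variable {k G V : Type*} [Field k] [Group G] [AddCommGroup V] [Module k V]

theorem isIntertwiningMap_sum_smul [Fintype G] (ρ : Representation k G V) {c : G → k}
    (hc : ∀ g h, c (h * g * h⁻¹) = c g) :
    IsIntertwiningMap ρ ρ (∑ g, c g • ρ g) := by
  refine ⟨fun h v => ?_⟩
  simp only [LinearMap.coe_sum, Finset.sum_apply, LinearMap.smul_apply, map_sum, map_smul,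
    ← Module.End.mul_apply, ← map_mul]
  rw [← (MulAut.conj h).toEquiv.sum_comp]
  simp [hc]

theorem IsIrreducible.nontrivial (ρ : Representation k G V) [IsIrreducible ρ] : Nontrivial V := by
  have : (⊥ : Subrepresentation ρ) ≠ ⊤ := bot_ne_top
  contrapose! this
  ext v
  simp [Subsingleton.elim v 0]

theorem sum_smul_eq_zero_of_sum_mul_character_eq_zero [Fintype G] [IsAlgClosed k] [CharZero k]
    [FiniteDimensional k V] (ρ : Representation k G V) [IsIrreducible ρ] {c : G → k}
    (hc : ∀ g h, c (h * g * h⁻¹) = c g) (hχ : ∑ g, c g * ρ.character g = 0) :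
    ∑ g, c g • ρ g = 0 := by
  obtain ⟨μ, hμ⟩ := IsIrreducible.algebraMap_intertwiningMap_bijective_of_isAlgClosed.2
    ((∑ g, c g • ρ g).intertwiningMap_of_isIntertwiningMap ρ ρ
      (isIntertwiningMap_sum_smul ρ hc).isIntertwining)
  have hT : ∑ g, c g • ρ g = μ • LinearMap.id := by
    ext v
    simpa using (DFunLike.congr_fun hμ v).symm
  have htrace : μ * Module.finrank k V = 0 := by
    rw [← hχ]
    simpa [character, map_sum, map_smul] using congrArg (LinearMap.trace k V) hT.symm
  have := IsIrreducible.nontrivial ρ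
  rw [hT, (mul_eq_zero.1 htrace).resolve_right (by simp [Module.finrank_pos.ne']), zero_smul]

end Schur

section OfModule

variable {k G : Type*} [Field k] [Group G]
variable (M : Type*) [AddCommGroup M] [Module k M] [Module (MonoidAlgebra k G) M]
  [IsScalarTower k (MonoidAlgebra k G) M]

theorem asAlgebraHom_ofModule' :
    (ofModule' (k := k) (G := G) M).asAlgebraHom = Algebra.lsmul k k M :=
  (MonoidAlgebra.lift k _ G).apply_symm_apply _

theorem ofModule'_apply (g : G) (m : M) :
    ofModule' (k := k) (G := G) M g m = MonoidAlgebra.of k G g • m := by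
  rw [← asAlgebraHom_of, asAlgebraHom_ofModule']
  rfl

noncomputable def _root_.Subrepresentation.submoduleSubrepresentationOrderIso' :
    Submodule (MonoidAlgebra k G) M ≃o Subrepresentation (ofModule' (k := k) (G := G) M) where
  toFun N := ⟨N.restrictScalars k, fun g m hm => by
    rw [ofModule'_apply]; exact N.smul_mem _ hm⟩
  invFun σ :=
    { σ.toSubmodule with
      smul_mem' r m hm := by
        induction r using MonoidAlgebra.induction_linear with
        | zero => simp only [zero_smul]; exact σ.toSubmodule.zero_mem
        | add x y hx hy => rw [add_smul]; exact σ.toSubmodule.add_mem hx hy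
        | single g a =>
          rw [show MonoidAlgebra.single g a = a • MonoidAlgebra.of k G g by simp, smul_assoc,
            ← ofModule'_apply]
          exact σ.toSubmodule.smul_mem a (σ.apply_mem_toSubmodule g hm) }
  left_inv _ := rfl
  right_inv _ := rfl
  map_rel_iff' := Iff.rfl

instance isIrreducible_ofModule' [IsSimpleModule (MonoidAlgebra k G) M] :
    IsIrreducible (ofModule' (k := k) (G := G) M) :=
  (Subrepresentation.submoduleSubrepresentationOrderIso' M).isSimpleOrder_iff.mp
    ((isSimpleModule_iff ..).mp ‹_›)

end OfModule

end Representation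

theorem IsSemisimpleRing.eq_zero_of_forall_isSimpleModule_smul_eq_zero {A : Type*} [Ring A]
    [IsSemisimpleRing A] {a : A}
    (h : ∀ W : Submodule A A, IsSimpleModule A W → ∀ w ∈ W, a • w = 0) : a = 0 := by
  have ha : a ∈ Module.annihilator A A := by
    rw [← Submodule.annihilator_top, ← IsSemisimpleModule.sSup_simples_eq_top, sSup_eq_iSup',
      Submodule.annihilator_iSup]
    exact Submodule.mem_iInf _ |>.2 fun W => Submodule.mem_annihilator.2 (h W W.2)
  simpa using Module.mem_annihilator.1 ha 1

namespace FDRep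

open Finset

universe u

variable {k G : Type u} [Field k] [Group G] [Fintype G]

theorem sum_ite_isConj_mul_character (V : FDRep k G) (x : G) (r : k)
    [DecidablePred (IsConj x)] :
    ∑ g, (if IsConj x g then r else 0) * V.character g =
      #{g | IsConj x g} * r * V.character x := by
  have hχ : ∀ g ∈ ({g | IsConj x g} : Finset G), r * V.character g = r * V.character x := by
    intro g hg
    obtain ⟨h, rfl⟩ := isConj_iff.1 (mem_filter.1 hg).2
    rw [char_conj]
  simp only [ite_mul, zero_mul, sum_ite, sum_const_zero, add_zero, sum_congr rfl hχ, sum_const,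
    nsmul_eq_mul, mul_assoc]

variable [IsAlgClosed k] [CharZero k]

theorem simple_of_isIrreducible {V : Type u} [AddCommGroup V] [Module k V] [FiniteDimensional k V]
    (ρ : Representation k G V) [ρ.IsIrreducible] : Simple (FDRep.of ρ) := by
  have := invertibleOfNonzero (NeZero.ne (Nat.card G : k))
  rw [simple_iff_char_is_norm_one]
  have h := ρ.char_orthonormal ρ
  simp only [Nonempty.intro (Representation.Equiv.refl ρ), if_true] at h
  rwa [inv_mul_eq_one₀ (NeZero.ne _), eq_comm] at h

theorem eq_zero_of_forall_sum_mul_character_eq_zero {c : G → k}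
    (hc : ∀ g h, c (h * g * h⁻¹) = c g)
    (hχ : ∀ V : FDRep k G, Simple V → ∑ g, c g * V.character g = 0) : c = 0 := by
  set a : MonoidAlgebra k G := ∑ g, MonoidAlgebra.single g (c g)
  have ha : a = 0 := by
    refine IsSemisimpleRing.eq_zero_of_forall_isSimpleModule_smul_eq_zero fun W _ w hw => ?_
    let ρ := Representation.ofModule' (k := k) (G := G) W
    have hρ : ∑ g, c g • ρ g = 0 :=
      ρ.sum_smul_eq_zero_of_sum_mul_character_eq_zero hc (hχ _ (simple_of_isIrreducible ρ))
    have hρa : ρ.asAlgebraHom a = 0 := by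
      simpa [a, map_sum, Representation.asAlgebraHom_single] using hρ
    have := DFunLike.congr_fun hρa ⟨w, hw⟩
    rw [Representation.asAlgebraHom_ofModule'] at this
    exact congrArg Subtype.val this
  ext g
  classical
  simpa [a, MonoidAlgebra.coeff_sum, Finsupp.single_apply] using congrArg (fun x => x.coeff g) ha

theorem isConj_of_forall_character_eq {x y : G}
    (h : ∀ V : FDRep k G, Simple V → V.character x = V.character y) : IsConj x y := by
  classical
  by_contra hxy
  set n : G → k := fun z => #{g | IsConj z g}
  set c : G → k := fun g => (if IsConj x g then n y else 0) - (if IsConj y g then n x else 0)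
  have hc : ∀ g h, c (h * g * h⁻¹) = c g := by
    intro g h
    have hg : IsConj g (h * g * h⁻¹) := isConj_iff.2 ⟨h, rfl⟩
    have hconj (z : G) : IsConj z (h * g * h⁻¹) ↔ IsConj z g :=
      ⟨fun hz => hz.trans hg.symm, fun hz => hz.trans hg⟩
    simp only [c, hconj]
  have hχ (V : FDRep k G) (hV : Simple V) : ∑ g, c g * V.character g = 0 := by
    simp only [c, sub_mul, sum_sub_distrib, sum_ite_isConj_mul_character, h V hV]
    ring
  have hcx : c x = n y := by
    have hyx : ¬IsConj y x := fun hyx => hxy hyx.symm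
    simp only [c, IsConj.refl, hyx, if_true, if_false, sub_zero]
  have hny : n y ≠ 0 := by
    simpa [n] using card_ne_zero_of_mem (mem_filter.2 ⟨mem_univ y, IsConj.refl y⟩)
  exact hny (hcx ▸ congrFun (eq_zero_of_forall_sum_mul_character_eq_zero hc hχ) x)

end FDRep

theorem isAdmissiblePair_iff_forall_isConj {G : Type} [Group G] {H : Subgroup G} [Finite H] :
    IsAdmissiblePair G H ↔ ∀ x y : H, IsConj (x : G) y → IsConj x y := by
  refine ⟨fun h x y hxy => ?_, fun h τ _ g s hs => ?_⟩
  · have := Fintype.ofFinite H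
    obtain ⟨s, hs⟩ := isConj_iff.1 hxy
    rw [← show (⟨s * x * s⁻¹, hs ▸ y.2⟩ : H) = y from Subtype.ext hs]
    exact FDRep.isConj_of_forall_character_eq fun τ hτ => (h τ hτ x s _).symm
  · obtain ⟨t, ht⟩ := isConj_iff.1 (h g ⟨_, hs⟩ (isConj_iff.2 ⟨s, rfl⟩))
    rw [← ht, FDRep.char_conj]

/-- Transitivity of admissibility: if `G₀ ⊆ G₁ ⊆ G`, `(G₁, G₀)` is admissible and
`(G, G₁)` is admissible, then `(G, G₀)` is admissible. -/
theorem isAdmissiblePair_trans (G : Type) [Group G] [Fintype G]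
    (G₀ G₁ : Subgroup G) (h01 : G₀ ≤ G₁)
    (h₁ : IsAdmissiblePair G₁ (G₀.subgroupOf G₁))
    (h₂ : IsAdmissiblePair G G₁) :
    IsAdmissiblePair G G₀ := by
  rw [isAdmissiblePair_iff_forall_isConj] at h₁ h₂ ⊢
  intro x y hxy
  have hG₁ := h₂ ⟨x, h01 x.2⟩ ⟨y, h01 y.2⟩ hxy
  have hG₀ := h₁ ⟨⟨x, h01 x.2⟩, x.2⟩ ⟨⟨y, h01 y.2⟩, y.2⟩ hG₁
  exact (Subgroup.subgroupOfEquivOfLe h01).toMonoidHom.map_isConj hG₀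
end

section
/- Let n ≥ 2, let G = S_n be the symmetric group of degree n, and let H be the stabilizer in G of the point n, so H is isomorphic to S_{n-1}. Then (G, H) is an admissible pair: for every irreducible complex representation τ of H with character χ_τ, every g ∈ H, and every s ∈ G with s g s⁻¹ ∈ H, one has χ_τ(s g s⁻¹) = χ_τ(g). -/
open CategoryTheory

lemma aux_isAdmissiblePair_stabilizer {α : Type} [DecidableEq α] (p : α) :
    IsAdmissiblePair (Equiv.Perm α) (MulAction.stabilizer (Equiv.Perm α) p) := by
  intro τ _ g s hs
  have hg : (g : Equiv.Perm α) p = p := g.2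
  have h1 : (s * (g : Equiv.Perm α) * s⁻¹) p = p := hs
  have hr : (g : Equiv.Perm α) (s⁻¹ p) = s⁻¹ p := by
    have h2 : s ((g : Equiv.Perm α) (s⁻¹ p)) = p := h1
    have := congrArg (s⁻¹ : Equiv.Perm α) h2
    simpa using this
  set c : Equiv.Perm α := Equiv.swap (s⁻¹ p) p with hc
  have hcomm : (g : Equiv.Perm α) * c * (g : Equiv.Perm α)⁻¹ = c := by
    rw [hc, ← Equiv.swap_apply_apply, hr, hg]
  have hgc : (g : Equiv.Perm α) * c = c * (g : Equiv.Perm α) := by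
    have := congrArg (· * (g : Equiv.Perm α)) hcomm
    simpa [mul_assoc] using this
  have hconj : c * (g : Equiv.Perm α) * c⁻¹ = g := by
    rw [mul_inv_eq_iff_eq_mul]
    exact hgc.symm
  have ht : s * c ∈ MulAction.stabilizer (Equiv.Perm α) p := by
    simp [MulAction.mem_stabilizer_iff, Equiv.Perm.smul_def, hc]
  have hperm : s * (g : Equiv.Perm α) * s⁻¹ = (s * c) * (g : Equiv.Perm α) * (s * c)⁻¹ := by
    calc s * (g : Equiv.Perm α) * s⁻¹
        = s * (c * (g : Equiv.Perm α) * c⁻¹) * s⁻¹ := by rw [hconj]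
      _ = (s * c) * (g : Equiv.Perm α) * (s * c)⁻¹ := by
          rw [mul_inv_rev]; simp [mul_assoc]
  have key : (⟨s * (g : Equiv.Perm α) * s⁻¹, hs⟩ :
      MulAction.stabilizer (Equiv.Perm α) p)
      = ⟨s * c, ht⟩ * g * (⟨s * c, ht⟩)⁻¹ := by
    apply Subtype.ext
    simpa using hperm
  rw [key, FDRep.char_conj]

/-- For `n ≥ 2`, the pair `(S_n, S_{n-1})`, where `S_{n-1}` is realised as the stabilizer
of the last point in the symmetric group `S_n = Perm (Fin n)`, is an admissible pair. -/
theorem isAdmissiblePair_symm_stabilizer (n : ℕ) (hn : 2 ≤ n) :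
    IsAdmissiblePair (Equiv.Perm (Fin n))
      (MulAction.stabilizer (Equiv.Perm (Fin n)) (⟨n - 1, by omega⟩ : Fin n)) :=
  aux_isAdmissiblePair_stabilizer _
end

section
/- Let α be a type, let a ∈ α, and let g and s be permutations of α such that g(a) = a and (s g s⁻¹)(a) = a. Then there exists a permutation t of α with t(a) = a and t g t⁻¹ = s g s⁻¹. (One may take t = s · (a, s⁻¹(a)), the product of s with the transposition exchanging a and s⁻¹(a).) -/
/-- If `g` and `s g s⁻¹` both fix the point `a`, then `s g s⁻¹` is conjugate to `g` by a
permutation fixing `a` (one may take `t = s * swap a (s⁻¹ a)`). -/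
theorem exists_conj_fixing_point {α : Type*} [DecidableEq α] (a : α)
    (g s : Equiv.Perm α) (hg : g a = a) (hsg : (s * g * s⁻¹) a = a) :
    ∃ t : Equiv.Perm α, t a = a ∧ t * g * t⁻¹ = s * g * s⁻¹ := by
  have hb : g (s⁻¹ a) = s⁻¹ a := by
    have := congrArg (fun x => s⁻¹ x) hsg
    simpa [Equiv.Perm.mul_apply] using this
  refine ⟨s * Equiv.swap a (s⁻¹ a), by simp [Equiv.Perm.mul_apply], ?_⟩
  have hcomm : g * Equiv.swap a (s⁻¹ a) * g⁻¹ = Equiv.swap a (s⁻¹ a) := by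
    rw [← Equiv.swap_apply_apply, hg, hb]
  have : g * Equiv.swap a (s⁻¹ a) = Equiv.swap a (s⁻¹ a) * g := by
    have := congrArg (· * g) hcomm
    simpa [mul_assoc] using this
  rw [mul_inv_rev, show s * Equiv.swap a (s⁻¹ a) * g = s * g * Equiv.swap a (s⁻¹ a) by
    rw [mul_assoc, ← this, ← mul_assoc]]
  group
end

section
/- Let m > n ≥ 1 be natural numbers, let G = S_m be the symmetric group of degree m, and let H be the subgroup of G consisting of all permutations that fix each of the points n+1, n+2, …, m, so H is isomorphic to S_n. Then (G, H) is an admissible pair: for every irreducible complex representation τ of H with character χ_τ, every g ∈ H, and every s ∈ G with s g s⁻¹ ∈ H, one has χ_τ(s g s⁻¹) = χ_τ(g). -/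
open CategoryTheory

/-!
Characters are class functions on `H`, so it suffices that two elements of `H` conjugate in `G`
are already conjugate in `H`. Here `H` is the image of `Perm {x | x < n}` under extension by the
identity, which preserves cycle types; since conjugacy classes of symmetric groups are determined
by cycle types, conjugacy in `S_m` descends to `S_n`.
-/

theorem IsAdmissiblePair.of_isConj {G : Type} [Group G] {H : Subgroup G}
    (hH : ∀ a b : H, IsConj (a : G) (b : G) → IsConj a b) : IsAdmissiblePair G H := by
  intro τ _ g s hs
  obtain ⟨t, ht⟩ := isConj_iff.mp (hH g ⟨_, hs⟩ (isConj_iff.mpr ⟨s, rfl⟩))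
  rw [← ht, FDRep.char_conj]

theorem MonoidHom.isConj_of_mem_range {K G : Type*} [Group K] [Group G] (f : K →* G)
    (hf : ∀ a b : K, IsConj (f a) (f b) → IsConj a b) :
    ∀ x y : f.range, IsConj (x : G) (y : G) → IsConj x y := by
  rintro ⟨_, a, rfl⟩ ⟨_, b, rfl⟩ hxy
  obtain ⟨c, hc⟩ := isConj_iff.mp (hf a b hxy)
  exact isConj_iff.mpr ⟨⟨f c, c, rfl⟩, Subtype.ext (by simp [← hc])⟩

namespace Equiv.Perm

variable {α : Type*} [DecidableEq α] [Fintype α]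

theorem isConj_ofSubtype_iff {p : α → Prop} [DecidablePred p] {a b : Perm (Subtype p)} :
    IsConj (ofSubtype a) (ofSubtype b) ↔ IsConj a b := by
  simp only [isConj_iff_cycleType_eq, cycleType_ofSubtype]

theorem fixingSubgroup_compl_eq_range_ofSubtype (s : Set α) [DecidablePred (· ∈ s)] :
    fixingSubgroup (Perm α) sᶜ = (ofSubtype : Perm s →* Perm α).range := by
  ext g
  rw [mem_fixingSubgroup_iff, mem_range_ofSubtype_iff]
  refine ⟨fun h x hx => ?_, fun h x hx => ?_⟩
  · by_contra hxs
    exact mem_support.mp hx (h x hxs)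
  · by_contra hgx
    exact hx (h (mem_support.mpr hgx))

end Equiv.Perm

theorem isAdmissiblePair_symm_symm_general (m n : ℕ) :
    IsAdmissiblePair (Equiv.Perm (Fin m))
      (fixingSubgroup (Equiv.Perm (Fin m)) {x : Fin m | n ≤ (x : ℕ)}) := by
  have hcompl : {x : Fin m | n ≤ (x : ℕ)} = {x : Fin m | (x : ℕ) < n}ᶜ := by
    ext x
    simp
  rw [hcompl, Equiv.Perm.fixingSubgroup_compl_eq_range_ofSubtype]
  exact IsAdmissiblePair.of_isConj <|
    MonoidHom.isConj_of_mem_range _ fun _ _ => Equiv.Perm.isConj_ofSubtype_iff.mp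

/-- For `m > n ≥ 1`, the pair `(S_m, S_n)`, where `S_n` is realised inside
`S_m = Perm (Fin m)` as the subgroup of permutations fixing each of the points
`n+1, …, m` (zero-indexed: each point with index `≥ n`), is an admissible pair. -/
theorem isAdmissiblePair_symm_symm (m n : ℕ) (hn : 1 ≤ n) (hnm : n < m) :
    IsAdmissiblePair (Equiv.Perm (Fin m))
      (fixingSubgroup (Equiv.Perm (Fin m)) {x : Fin m | n ≤ (x : ℕ)}) :=
  isAdmissiblePair_symm_symm_general m n
end
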